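/- Set a := 8m/(m−1). For every n ∈ ℕ and every integer r ≥ 1, P( W_n > 5·a·d·r ) ≤ e^{−(log 3 − 1) r} + e^{−2r/3}. -/

import Mathlib

/-!
Let `ψ s = m s e^{d s}`. For `0 ≤ k ≤ d` one has `e^{s k} ≤ 1 + k s e^{s d}`, so the offspring law
satisfies `E e^{s ξ} ≤ e^{ψ s}` for `s ≥ 0`. Since `Z n` only depends on the generations before `n`,
conditioning on it gives `E e^{s Z (n+1)} = E (E e^{s ξ})^{Z n} ≤ E e^{ψ(s) Z n}`, hence
`E e^{s Z n} ≤ exp (ψ^[n] s)`. Along the orbit of `θ / m^n` the factors `e^{d s}` only contribute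
a geometric series, so `ψ^[n] (θ / m^n) ≤ 2θ` once `2 d θ ≤ (m - 1) log 2`, i.e.
`E e^{θ W n} ≤ e^{2θ}`.
Chernoff's bound with `θ = 1 / (a d)` then gives `P(W n > 5 a d r) ≤ e^{2θ - 5r}`, which is already
smaller than the first term.
-/

open MeasureTheory ProbabilityTheory Real Set
open scoped ENNReal

namespace GaltonWatson

lemma lintegral_eq_tsum_setLIntegral_fiber {Ω : Type*} [MeasurableSpace Ω] {P : Measure Ω}
    {T : Ω → ℕ} (hT : Measurable T) (f : Ω → ℝ≥0∞) :
    ∫⁻ ω, f ω ∂P = ∑' k, ∫⁻ ω in T ⁻¹' {k}, f ω ∂P := by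
  rw [← lintegral_iUnion (fun k => hT (measurableSet_singleton k)) (pairwise_disjoint_fiber T),
    ← preimage_iUnion, iUnion_of_singleton, preimage_univ, setLIntegral_univ]

lemma setLIntegral_eq_measure_mul_lintegral_of_indep {Ω : Type*} {m₁ m₂ mΩ : MeasurableSpace Ω}
    {P : Measure Ω} (h₁ : m₁ ≤ mΩ) (h₂ : m₂ ≤ mΩ) (hind : Indep m₁ m₂ P)
    {A : Set Ω} (hA : MeasurableSet[m₁] A) {g : Ω → ℝ≥0∞} (hg : Measurable[m₂] g) :
    ∫⁻ ω in A, g ω ∂P = P A * ∫⁻ ω, g ω ∂P := by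
  have hA' : Measurable[m₁] (A.indicator fun _ => (1 : ℝ≥0∞)) := measurable_const.indicator hA
  have hprod := lintegral_mul_eq_lintegral_mul_lintegral_of_independent_measurableSpace h₁ h₂ hind
    hA' hg
  rw [lintegral_indicator_const (h₁ A hA), one_mul] at hprod
  rw [← hprod, ← lintegral_indicator (h₁ A hA)]
  congr 1 with ω
  by_cases hω : ω ∈ A <;> simp [hω]

lemma measurable_sum_range {Ω : Type*} {mΩ : MeasurableSpace Ω} {f : ℕ → Ω → ℕ} {N : Ω → ℕ}
    (hf : ∀ i, Measurable (f i)) (hN : Measurable N) :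
    Measurable fun ω => ∑ i ∈ Finset.range (N ω), f i ω := by
  have hsum : Measurable fun q : Ω × ℕ => ∑ i ∈ Finset.range q.2, f i q.1 :=
    measurable_from_prod_countable_left fun k =>
      Finset.measurable_sum (Finset.range k) fun i _ => hf i
  exact hsum.comp (measurable_id.prodMk hN)

lemma measure_lt_mul_le_exp_mul_lintegral {Ω : Type*} {mΩ : MeasurableSpace Ω} {P : Measure Ω}
    {T : Ω → ℕ} (hT : Measurable T) (s t : ℝ) :
    P {ω | t < s * T ω} ≤ ENNReal.ofReal (exp (-t)) * ∫⁻ ω, ENNReal.ofReal (exp s) ^ T ω ∂P := by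
  calc P {ω | t < s * T ω}
      ≤ P {ω | ENNReal.ofReal (exp t) ≤ ENNReal.ofReal (exp s) ^ T ω} := by
        refine measure_mono fun ω (hω : t < s * T ω) => ?_
        show ENNReal.ofReal (exp t) ≤ _
        rw [← ENNReal.ofReal_pow (exp_pos s).le, ← exp_nat_mul, mul_comm]
        exact ENNReal.ofReal_le_ofReal (exp_le_exp.2 hω.le)
    _ ≤ (∫⁻ ω, ENNReal.ofReal (exp s) ^ T ω ∂P) / ENNReal.ofReal (exp t) :=
        meas_ge_le_lintegral_div (measurable_from_top.comp hT).aemeasurable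
          (ENNReal.ofReal_pos.2 (exp_pos t)).ne' ENNReal.ofReal_ne_top
    _ = ENNReal.ofReal (exp (-t)) * ∫⁻ ω, ENNReal.ofReal (exp s) ^ T ω ∂P := by
        rw [ENNReal.div_eq_inv_mul, ← ENNReal.ofReal_inv_of_pos (exp_pos t), exp_neg]

lemma lintegral_natCast_eq_ofReal_tsum {μ : Measure ℕ} [IsFiniteMeasure μ]
    (h : Summable fun k : ℕ => k * (μ {k}).toReal) :
    ∫⁻ x, (x : ℝ≥0∞) ∂μ = ENNReal.ofReal (∑' k : ℕ, k * (μ {k}).toReal) := by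
  rw [lintegral_countable', ENNReal.ofReal_tsum_of_nonneg (fun k => by positivity) h]
  congr 1 with k
  rw [ENNReal.ofReal_mul (Nat.cast_nonneg k), ENNReal.ofReal_natCast,
    ENNReal.ofReal_toReal (measure_ne_top μ _), mul_comm]

lemma exp_mul_le_one_add {s : ℝ} (hs : 0 ≤ s) {d x : ℝ} (hx : 0 ≤ x) (hxd : x ≤ d) :
    exp (x * s) ≤ 1 + x * (s * exp (d * s)) := by
  have h : exp (x * s) - 1 ≤ x * s * exp (x * s) := by
    have := mul_le_mul_of_nonneg_left (add_one_le_exp (-(x * s))) (exp_pos (x * s)).le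
    rw [mul_add, ← exp_add, add_neg_cancel, exp_zero] at this
    linarith
  have h' : x * s * exp (x * s) ≤ x * s * exp (d * s) := by gcongr
  linarith

noncomputable def logMgfBound (m d s : ℝ) : ℝ := m * s * exp (d * s)

lemma logMgfBound_nonneg {m d s : ℝ} (hm : 0 ≤ m) (hs : 0 ≤ s) : 0 ≤ logMgfBound m d s := by
  unfold logMgfBound; positivity

lemma lintegral_exp_pow_le_exp_logMgfBound {μ : Measure ℕ} [IsProbabilityMeasure μ] {d : ℕ}
    {m : ℝ} (hm : m ≠ 0) (hsupp : ∀ k : ℕ, d < k → μ {k} = 0)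
    (hmean : ∑' k : ℕ, (k : ℝ) * (μ {k}).toReal = m) {s : ℝ} (hs : 0 ≤ s) :
    ∫⁻ x, ENNReal.ofReal (exp s) ^ x ∂μ ≤ ENNReal.ofReal (exp (logMgfBound m d s)) := by
  -- a non-summable `tsum` would be the junk value `0 ≠ m`
  have hsum : Summable fun k : ℕ => k * (μ {k}).toReal := by
    by_contra h
    exact hm (by rw [← hmean, tsum_eq_zero_of_not_summable h])
  have hmean' : ∫⁻ x, (x : ℝ≥0∞) ∂μ = ENNReal.ofReal m := by
    rw [lintegral_natCast_eq_ofReal_tsum hsum, hmean]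
  have hle : ∀ᵐ x ∂μ, x ≤ d :=
    ae_iff_of_countable.2 fun k hk => not_lt.1 fun hdk => hk (hsupp k hdk)
  have hm0 : 0 ≤ m := hmean ▸ tsum_nonneg fun k => by positivity
  set K := s * exp (d * s)
  calc ∫⁻ x, ENNReal.ofReal (exp s) ^ x ∂μ
      ≤ ∫⁻ x, 1 + x * ENNReal.ofReal K ∂μ := by
        refine lintegral_mono_ae (hle.mono fun x hx => ?_)
        rw [← ENNReal.ofReal_pow (exp_pos s).le, ← exp_nat_mul, ← ENNReal.ofReal_natCast,
          ← ENNReal.ofReal_mul (Nat.cast_nonneg x), ← ENNReal.ofReal_one,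
          ← ENNReal.ofReal_add zero_le_one (by positivity)]
        exact ENNReal.ofReal_le_ofReal
          (exp_mul_le_one_add hs (Nat.cast_nonneg x) (by exact_mod_cast hx))
    _ = ENNReal.ofReal (1 + m * K) := by
        rw [lintegral_add_left measurable_const, lintegral_mul_const _ measurable_from_top,
          hmean', lintegral_const, measure_univ, one_mul, ← ENNReal.ofReal_mul hm0,
          ← ENNReal.ofReal_one, ← ENNReal.ofReal_add zero_le_one (by positivity)]
    _ ≤ ENNReal.ofReal (exp (logMgfBound m d s)) := by
        rw [logMgfBound, mul_assoc]
        exact ENNReal.ofReal_le_ofReal (by linarith [add_one_le_exp (m * K)])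

lemma iterate_logMgfBound_le {m d κ x : ℝ} (hm : 1 ≤ m) (hd : 0 ≤ d) (hκ : 0 ≤ κ)
    (hκd : 2 * d ≤ κ * (m - 1)) (hx : 0 ≤ x) (j : ℕ) (hj : κ * (m ^ j * x) ≤ log 2) :
    (logMgfBound m d)^[j] x ≤ m ^ j * x * exp (κ * (m ^ j * x)) := by
  induction j with
  | zero => simpa using le_mul_of_one_le_right hx (one_le_exp (by positivity))
  | succ j ih =>
    set A := m ^ j * x
    have hA : 0 ≤ A := by positivity
    have hmA : m ^ (j + 1) * x = m * A := by ring
    rw [hmA] at hj ⊢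
    have hκA : κ * A ≤ log 2 := le_trans (by nlinarith) hj
    set y := (logMgfBound m d)^[j] x
    have hy : 0 ≤ y :=
      (MapsTo.iterate (fun s (hs : 0 ≤ s) => logMgfBound_nonneg (by linarith) hs) j) hx
    have hy2 : y ≤ 2 * A := calc
      y ≤ A * exp (κ * A) := ih hκA
      _ ≤ A * 2 := by gcongr; exact (exp_le_exp.2 hκA).trans_eq (exp_log two_pos)
      _ = 2 * A := mul_comm _ _
    rw [Function.iterate_succ_apply']
    calc m * y * exp (d * y)
        ≤ m * (A * exp (κ * A)) * exp (d * (2 * A)) := by gcongr; exact ih hκA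
      _ = m * A * exp ((κ + 2 * d) * A) := by
          rw [show (κ + 2 * d) * A = κ * A + d * (2 * A) by ring, exp_add]; ring
      _ ≤ m * A * exp (κ * (m * A)) := by
          gcongr m * A * exp ?_; nlinarith

lemma iterate_logMgfBound_div_pow_le {m d θ : ℝ} (hm : 1 < m) (hd : 0 ≤ d) (hθ : 0 ≤ θ)
    (hθd : 2 * d * θ ≤ (m - 1) * log 2) (n : ℕ) :
    (logMgfBound m d)^[n] (θ / m ^ n) ≤ 2 * θ := by
  have hm1 : 0 < m - 1 := by linarith
  have hmn : m ^ n * (θ / m ^ n) = θ := mul_div_cancel₀ _ (by positivity)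
  have hκθ : 2 * d / (m - 1) * θ ≤ log 2 := by
    rw [div_mul_eq_mul_div, div_le_iff₀ hm1]; linarith
  have h := iterate_logMgfBound_le (d := d) (κ := 2 * d / (m - 1)) (x := θ / m ^ n) hm.le hd
    (by positivity) (by rw [div_mul_cancel₀ _ hm1.ne']) (by positivity) n (by rwa [hmn])
  rw [hmn] at h
  calc _ ≤ θ * exp (2 * d / (m - 1) * θ) := h
    _ ≤ θ * 2 := by gcongr; exact (exp_le_exp.2 hκθ).trans_eq (exp_log two_pos)
    _ = 2 * θ := mul_comm _ _

lemma exp_neg_five_mul_add_le {θ r : ℝ} (hθ : 2 * θ ≤ 1) (hr : 1 ≤ r) :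
    exp (-(5 * r) + 2 * θ) ≤ exp (-(log 3 - 1) * r) + exp (-2 * r / 3) := by
  have hlog3 : log 3 * r ≤ 2 * r := by
    gcongr; linarith [log_le_sub_one_of_pos (show (0 : ℝ) < 3 by norm_num)]
  linarith [exp_le_exp.2 (show -(5 * r) + 2 * θ ≤ -(log 3 - 1) * r by linarith),
    exp_pos (-2 * r / 3)]

abbrev offspringSigma {Ω : Type*} (ξ : ℕ → ℕ → Ω → ℕ) (s : Set ℕ) : MeasurableSpace Ω :=
  ⨆ p ∈ Prod.fst ⁻¹' s, MeasurableSpace.comap (ξ p.1 p.2) inferInstance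

section Branching

variable {Ω : Type*} {mΩ : MeasurableSpace Ω} {P : Measure Ω} {ξ : ℕ → ℕ → Ω → ℕ}
  {Z : ℕ → Ω → ℕ}

lemma offspringSigma_le (hmeas : ∀ n i, Measurable (ξ n i)) (s : Set ℕ) :
    offspringSigma ξ s ≤ mΩ :=
  iSup₂_le fun p _ => (hmeas p.1 p.2).comap_le

lemma offspringSigma_mono {s t : Set ℕ} (h : s ⊆ t) : offspringSigma ξ s ≤ offspringSigma ξ t :=
  biSup_mono fun _ hp => h hp

lemma measurable_offspring_of_mem {s : Set ℕ} {n : ℕ} (hn : n ∈ s) (i : ℕ) :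
    Measurable[offspringSigma ξ s] (ξ n i) :=
  Measurable.of_comap_le <| le_iSup₂ (f := fun (p : ℕ × ℕ) (_ : p ∈ Prod.fst ⁻¹' s) =>
    MeasurableSpace.comap (ξ p.1 p.2) inferInstance) (n, i) hn

lemma indep_offspringSigma (hmeas : ∀ n i, Measurable (ξ n i))
    (hindep : iIndepFun (fun p : ℕ × ℕ => ξ p.1 p.2) P) {s t : Set ℕ} (hst : Disjoint s t) :
    Indep (offspringSigma ξ s) (offspringSigma ξ t) P :=
  indep_iSup_of_disjoint (m := fun p : ℕ × ℕ => MeasurableSpace.comap (ξ p.1 p.2) inferInstance)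
    (fun p => (hmeas p.1 p.2).comap_le) hindep.iIndep (hst.preimage Prod.fst)

lemma measurable_generation_offspringSigma_Iio (hZ0 : ∀ ω, Z 0 ω = 1)
    (hZsucc : ∀ n ω, Z (n + 1) ω = ∑ i ∈ Finset.range (Z n ω), ξ n i ω) (n : ℕ) :
    Measurable[offspringSigma ξ (Iio n)] (Z n) := by
  induction n with
  | zero => simp only [funext hZ0]; exact measurable_const
  | succ n ih =>
    rw [funext (hZsucc n)]
    exact measurable_sum_range (mΩ := offspringSigma ξ (Iio (n + 1)))
      (measurable_offspring_of_mem (Nat.lt_succ_self n))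
      (ih.mono (offspringSigma_mono (Iio_subset_Iio n.le_succ)) le_rfl)

lemma measurable_generation (hmeas : ∀ n i, Measurable (ξ n i)) (hZ0 : ∀ ω, Z 0 ω = 1)
    (hZsucc : ∀ n ω, Z (n + 1) ω = ∑ i ∈ Finset.range (Z n ω), ξ n i ω) (n : ℕ) :
    Measurable (Z n) :=
  (measurable_generation_offspringSigma_Iio hZ0 hZsucc n).mono (offspringSigma_le hmeas _) le_rfl

variable {μ : Measure ℕ}

theorem lintegral_pow_generation_succ (hmeas : ∀ n i, Measurable (ξ n i))
    (hlaw : ∀ n i, P.map (ξ n i) = μ) (hindep : iIndepFun (fun p : ℕ × ℕ => ξ p.1 p.2) P)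
    (hZ0 : ∀ ω, Z 0 ω = 1)
    (hZsucc : ∀ n ω, Z (n + 1) ω = ∑ i ∈ Finset.range (Z n ω), ξ n i ω) (c : ℝ≥0∞) (n : ℕ) :
    ∫⁻ ω, c ^ Z (n + 1) ω ∂P = ∫⁻ ω, (∫⁻ x, c ^ x ∂μ) ^ Z n ω ∂P := by
  have hZn := measurable_generation hmeas hZ0 hZsucc n
  have hrow (k : ℕ) : ∫⁻ ω, ∏ i ∈ Finset.range k, c ^ ξ n i ω ∂P = (∫⁻ x, c ^ x ∂μ) ^ k := by
    have hiid : iIndepFun (fun i ω => c ^ ξ n i ω) P :=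
      (hindep.precomp (Prod.mk_right_injective n)).comp (fun _ x => c ^ x)
        fun _ => measurable_from_top
    rw [lintegral_prod_eq_prod_lintegral_of_indepFun _ _ hiid
      fun i => measurable_from_top.comp (hmeas n i)]
    simp_rw [← lintegral_map measurable_from_top (hmeas n _), hlaw, Finset.prod_const,
      Finset.card_range]
  rw [lintegral_eq_tsum_setLIntegral_fiber hZn, lintegral_eq_tsum_setLIntegral_fiber hZn]
  congr 1 with k
  have hk : MeasurableSet (Z n ⁻¹' {k}) := hZn (measurableSet_singleton k)
  calc ∫⁻ ω in Z n ⁻¹' {k}, c ^ Z (n + 1) ω ∂P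
      = ∫⁻ ω in Z n ⁻¹' {k}, ∏ i ∈ Finset.range k, c ^ ξ n i ω ∂P :=
        setLIntegral_congr_fun hk fun ω hω => by
          rw [hZsucc, show Z n ω = k from hω, Finset.prod_pow_eq_pow_sum]
    _ = P (Z n ⁻¹' {k}) * ∫⁻ ω, ∏ i ∈ Finset.range k, c ^ ξ n i ω ∂P :=
        setLIntegral_eq_measure_mul_lintegral_of_indep (offspringSigma_le hmeas _)
          (offspringSigma_le hmeas _) (indep_offspringSigma hmeas hindep (by simp))
          (measurable_generation_offspringSigma_Iio hZ0 hZsucc n (measurableSet_singleton k))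
          (Finset.measurable_prod _ fun i _ =>
            measurable_from_top.comp (measurable_offspring_of_mem (mem_singleton n) i))
    _ = ∫⁻ ω in Z n ⁻¹' {k}, (∫⁻ x, c ^ x ∂μ) ^ Z n ω ∂P := by
        rw [setLIntegral_congr_fun hk fun ω (hω : Z n ω = k) => by rw [hω], setLIntegral_const,
          hrow, mul_comm]

lemma lintegral_exp_pow_generation_le [IsProbabilityMeasure P] [IsProbabilityMeasure μ]
    {d : ℕ} {m : ℝ} (hm : m ≠ 0)
    (hsupp : ∀ k : ℕ, d < k → μ {k} = 0) (hmean : ∑' k : ℕ, (k : ℝ) * (μ {k}).toReal = m)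
    (hmeas : ∀ n i, Measurable (ξ n i)) (hlaw : ∀ n i, P.map (ξ n i) = μ)
    (hindep : iIndepFun (fun p : ℕ × ℕ => ξ p.1 p.2) P) (hZ0 : ∀ ω, Z 0 ω = 1)
    (hZsucc : ∀ n ω, Z (n + 1) ω = ∑ i ∈ Finset.range (Z n ω), ξ n i ω) (n : ℕ) {s : ℝ}
    (hs : 0 ≤ s) :
    ∫⁻ ω, ENNReal.ofReal (exp s) ^ Z n ω ∂P ≤
      ENNReal.ofReal (exp ((logMgfBound m d)^[n] s)) := by
  have hm0 : 0 ≤ m := hmean ▸ tsum_nonneg fun k => by positivity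
  induction n generalizing s with
  | zero => simp [hZ0]
  | succ n ih =>
    rw [lintegral_pow_generation_succ hmeas hlaw hindep hZ0 hZsucc, Function.iterate_succ_apply]
    calc ∫⁻ ω, (∫⁻ x, ENNReal.ofReal (exp s) ^ x ∂μ) ^ Z n ω ∂P
        ≤ ∫⁻ ω, ENNReal.ofReal (exp (logMgfBound m d s)) ^ Z n ω ∂P := by
          gcongr; exact lintegral_exp_pow_le_exp_logMgfBound hm hsupp hmean hs
      _ ≤ _ := ih (logMgfBound_nonneg hm0 hs)

lemma lintegral_exp_div_pow_pow_generation_le [IsProbabilityMeasure P] [IsProbabilityMeasure μ]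
    {d : ℕ} {m θ : ℝ} (hm : 1 < m) (hsupp : ∀ k : ℕ, d < k → μ {k} = 0)
    (hmean : ∑' k : ℕ, (k : ℝ) * (μ {k}).toReal = m) (hmeas : ∀ n i, Measurable (ξ n i))
    (hlaw : ∀ n i, P.map (ξ n i) = μ) (hindep : iIndepFun (fun p : ℕ × ℕ => ξ p.1 p.2) P)
    (hZ0 : ∀ ω, Z 0 ω = 1)
    (hZsucc : ∀ n ω, Z (n + 1) ω = ∑ i ∈ Finset.range (Z n ω), ξ n i ω) (hθ : 0 ≤ θ)
    (hθd : 2 * d * θ ≤ (m - 1) * log 2) (n : ℕ) :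
    ∫⁻ ω, ENNReal.ofReal (exp (θ / m ^ n)) ^ Z n ω ∂P ≤ ENNReal.ofReal (exp (2 * θ)) :=
  (lintegral_exp_pow_generation_le (by positivity) hsupp hmean hmeas hlaw hindep hZ0 hZsucc n
    (by positivity)).trans <| ENNReal.ofReal_le_ofReal <| exp_le_exp.2 <|
      iterate_logMgfBound_div_pow_le hm (by positivity) hθ hθd n

end Branching

end GaltonWatson

open GaltonWatson

/-- Set a := 8m/(m−1). For every n ∈ ℕ and integer r ≥ 1,
P(W_n > 5·a·d·r) ≤ e^{−(log 3 − 1)r} + e^{−2r/3}. -/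
theorem gw_tail_Wn_two_terms
    {Ω : Type*} [MeasurableSpace Ω] (P : MeasureTheory.Measure Ω)
    [MeasureTheory.IsProbabilityMeasure P]
    (d : ℕ) (hd : 2 ≤ d) (m : ℝ) (hm : 1 < m)
    (μ : MeasureTheory.Measure ℕ) [MeasureTheory.IsProbabilityMeasure μ]
    (hsupp : ∀ k : ℕ, d < k → μ {k} = 0)
    (hmean : ∑' k : ℕ, (k : ℝ) * (μ {k}).toReal = m)
    (ξ : ℕ → ℕ → Ω → ℕ)
    (hmeas : ∀ n i, Measurable (ξ n i))
    (hlaw : ∀ n i, MeasureTheory.Measure.map (ξ n i) P = μ)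
    (hindep : ProbabilityTheory.iIndepFun
      (fun p : ℕ × ℕ => ξ p.1 p.2) P)
    (Z : ℕ → Ω → ℕ) (hZ0 : ∀ ω, Z 0 ω = 1)
    (hZsucc : ∀ n ω, Z (n + 1) ω = ∑ i ∈ Finset.range (Z n ω), ξ n i ω)
    (W : ℕ → Ω → ℝ) (hW : ∀ n ω, W n ω = (Z n ω : ℝ) / m ^ n)
    (a : ℝ) (ha : a = 8 * m / (m - 1)) (n : ℕ) (r : ℕ) (hr : 1 ≤ r) :
    P {ω | 5 * a * d * r < W n ω} ≤
      ENNReal.ofReal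
        (Real.exp (-(Real.log 3 - 1) * r) + Real.exp (-2 * r / 3)) := by
  have hm1 : 0 < m - 1 := by linarith
  have ha0 : 0 < a := by rw [ha]; exact div_pos (by linarith) hm1
  have ham : a * (m - 1) = 8 * m := by rw [ha]; field_simp
  have had : 16 ≤ a * d := by
    have hd2 : (2 : ℝ) ≤ d := by exact_mod_cast hd
    nlinarith
  obtain ⟨θ, hθ, hθad⟩ : ∃ θ : ℝ, 0 < θ ∧ θ * (a * d) = 1 :=
    ⟨1 / (a * d), by positivity, one_div_mul_cancel (by positivity)⟩
  have hθd : 2 * d * θ ≤ (m - 1) * log 2 := by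
    refine le_of_mul_le_mul_right ?_ ha0
    have hlog2 : 1 / 4 < log 2 := lt_trans (by norm_num) log_two_gt_d9
    nlinarith
  have hmgf := lintegral_exp_div_pow_pow_generation_le hm hsupp hmean hmeas hlaw hindep hZ0 hZsucc
    hθ.le hθd n
  calc P {ω | 5 * a * d * r < W n ω}
      ≤ P {ω | 5 * r < θ / m ^ n * Z n ω} := by
        refine measure_mono fun ω (hω : 5 * a * d * r < W n ω) => ?_
        calc (5 * r : ℝ) = θ * (5 * a * d * r) := by linear_combination (-5 * r : ℝ) * hθad
          _ < θ * W n ω := by gcongr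
          _ = θ / m ^ n * Z n ω := by rw [hW]; ring
    _ ≤ ENNReal.ofReal (exp (-(5 * r))) * ENNReal.ofReal (exp (2 * θ)) :=
        (measure_lt_mul_le_exp_mul_lintegral (measurable_generation hmeas hZ0 hZsucc n) _ _).trans
          (by gcongr)
    _ ≤ _ := by
        rw [← ENNReal.ofReal_mul (exp_pos _).le, ← exp_add]
        exact ENNReal.ofReal_le_ofReal
          (exp_neg_five_mul_add_le (by nlinarith) (by exact_mod_cast hr))
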